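/- Let M = (M_1,…,M_n) be an n-outcome POVM on ℂ^d and let m ≥ 2. Then (1) q^{(m)}(M) ≤ t^{(m)}(M), where t^{(m)}(M) = sup{ t ∈ [0,1] : the POVM Φ_t(M) with effects Φ_t(M)_i = t·M_i + (1−t)·(tr M_i/d)·𝟙 is m-outcome simulable }; and (2) R^{(m)}(M) ≤ 1/q^{(m)}(M) − 1, where R^{(m)}(M) = inf{ s ≥ 0 : there exists an n-outcome POVM K on ℂ^d with (M + sK)/(1+s) m-outcome simulable }. -/

import Mathlib

open scoped BigOperators ComplexOrder

/-- An `n`-outcome POVM on ℂ^d: a tuple of positive semidefinite matrices summing to `1`. -/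
def IsPOVM {d n : ℕ} (M : Fin n → Matrix (Fin d) (Fin d) ℂ) : Prop :=
  (∀ i, (M i).PosSemidef) ∧ ∑ i, M i = 1

/-- `M` is a post-processing of `N`: effects `M_i = Σ_j q_{i|j} N_j` for conditional
probabilities `q_{i|j}`. -/
def IsPostProcessingOf {d n k : ℕ} (M : Fin n → Matrix (Fin d) (Fin d) ℂ)
    (N : Fin k → Matrix (Fin d) (Fin d) ℂ) : Prop :=
  ∃ q : Fin n → Fin k → ℝ, (∀ i j, 0 ≤ q i j) ∧ (∀ j, ∑ i, q i j = 1) ∧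
    ∀ i, M i = ∑ j, ((q i j : ℝ) : ℂ) • N j

/-- `M` is `m`-outcome simulable: a finite convex combination of post-processings of POVMs
with at most `m` outcomes. -/
def IsSimulable {d n : ℕ} (m : ℕ) (M : Fin n → Matrix (Fin d) (Fin d) ℂ) : Prop :=
  ∃ (α : ℕ) (p : Fin α → ℝ) (k : Fin α → ℕ)
    (N : (a : Fin α) → Fin (k a) → Matrix (Fin d) (Fin d) ℂ)
    (M' : Fin α → Fin n → Matrix (Fin d) (Fin d) ℂ),
    (∀ a, 0 ≤ p a) ∧ (∑ a, p a = 1) ∧ (∀ a, k a ≤ m) ∧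
    (∀ a, IsPOVM (N a)) ∧ (∀ a, IsPostProcessingOf (M' a) (N a)) ∧
    (∀ i, M i = ∑ a, ((p a : ℝ) : ℂ) • M' a i)

/-- The `(n+1)`-outcome POVM `(q M_1, …, q M_n, (1−q) 𝟙)`. -/
noncomputable def extendPOVM {d n : ℕ} (q : ℝ) (M : Fin n → Matrix (Fin d) (Fin d) ℂ) :
    Fin (n + 1) → Matrix (Fin d) (Fin d) ℂ :=
  Fin.snoc (fun i => (q : ℂ) • M i) (((1 - q : ℝ) : ℂ) • 1)

/-- `q^{(m)}(M)`: the supremum of `q ∈ [0,1]` such that `(qM_1,…,qM_n,(1−q)𝟙)` is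
`m`-outcome simulable. -/
noncomputable def qSim {d n : ℕ} (m : ℕ) (M : Fin n → Matrix (Fin d) (Fin d) ℂ) : ℝ :=
  sSup {q : ℝ | q ∈ Set.Icc (0 : ℝ) 1 ∧ IsSimulable m (extendPOVM q M)}

/-- `t^{(m)}(M)`: critical visibility for simulability of the depolarized POVM `Φ_t(M)`. -/
noncomputable def tSim {d n : ℕ} (m : ℕ) (M : Fin n → Matrix (Fin d) (Fin d) ℂ) : ℝ :=
  sSup {t : ℝ | t ∈ Set.Icc (0 : ℝ) 1 ∧
    IsSimulable m (fun i => (t : ℂ) • M i + ((1 - t : ℝ) : ℂ) • (((M i).trace / (d : ℂ)) • 1))}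

/-- `R^{(m)}(M)`: robustness of `M` with respect to `m`-outcome simulable POVMs. -/
noncomputable def RSim {d n : ℕ} (m : ℕ) (M : Fin n → Matrix (Fin d) (Fin d) ℂ) : ℝ :=
  sInf {s : ℝ | 0 ≤ s ∧ ∃ K : Fin n → Matrix (Fin d) (Fin d) ℂ, IsPOVM K ∧
    IsSimulable m (fun i => (((1 + s)⁻¹ : ℝ) : ℂ) • (M i + ((s : ℝ) : ℂ) • K i))}

lemma psd_smul_real {d : ℕ} {A : Matrix (Fin d) (Fin d) ℂ} (hA : A.PosSemidef) {c : ℝ}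
    (hc : 0 ≤ c) : ((c : ℂ) • A).PosSemidef := by
  constructor
  · unfold Matrix.IsHermitian
    rw [Matrix.conjTranspose_smul, hA.1]
    congr 1
    simp [Complex.ext_iff]
  · intro x
    exact (hA.smul (a := (c : ℂ)) (by exact_mod_cast hc)).2 x

lemma psd_trace_nonneg {d : ℕ} {A : Matrix (Fin d) (Fin d) ℂ} (hA : A.PosSemidef) :
    0 ≤ A.trace := by
  rw [Matrix.trace]
  apply Finset.sum_nonneg
  intro i _
  have h := hA.dotProduct_mulVec_nonneg (Pi.single i 1)
  simpa [Matrix.mulVec_single, dotProduct, Pi.single_apply] using h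

lemma psd_sum {d : ℕ} {ι : Type*} (s : Finset ι) (f : ι → Matrix (Fin d) (Fin d) ℂ)
    (h : ∀ i ∈ s, (f i).PosSemidef) : (∑ i ∈ s, f i).PosSemidef :=
  Finset.sum_induction f _ (fun _ _ ha hb => ha.add hb) Matrix.PosSemidef.zero h

lemma simulable_post {d n k m : ℕ} {N : Fin k → Matrix (Fin d) (Fin d) ℂ}
    {P : Fin n → Matrix (Fin d) (Fin d) ℂ} (hN : IsSimulable m N)
    (hP : IsPostProcessingOf P N) : IsSimulable m P := by
  obtain ⟨α, p, kk, Nf, M', hp0, hp1, hkm, hNf, hpp, hsum⟩ := hN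
  obtain ⟨r, hr0, hr1, hrP⟩ := hP
  refine ⟨α, p, kk, Nf, fun a i => ∑ j, ((r i j : ℝ) : ℂ) • M' a j, hp0, hp1, hkm, hNf, ?_, ?_⟩
  · intro a
    obtain ⟨qa, hq0, hq1, hqM⟩ := hpp a
    refine ⟨fun i l => ∑ j, r i j * qa j l, ?_, ?_, ?_⟩
    · exact fun i l => Finset.sum_nonneg fun j _ => mul_nonneg (hr0 i j) (hq0 j l)
    · intro l
      rw [Finset.sum_comm]
      have : ∀ j, ∑ i, r i j * qa j l = qa j l := by
        intro j; rw [← Finset.sum_mul, hr1 j, one_mul]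
      simp_rw [this]
      exact hq1 l
    · intro i
      simp_rw [hqM, Finset.smul_sum, smul_smul]
      rw [Finset.sum_comm]
      refine Finset.sum_congr rfl fun l _ => ?_
      rw [← Finset.sum_smul]
      push_cast
      rfl
  · intro i
    rw [hrP i]
    simp_rw [hsum, Finset.smul_sum, smul_smul]
    rw [Finset.sum_comm]
    refine Finset.sum_congr rfl fun a _ => Finset.sum_congr rfl fun j _ => ?_
    rw [mul_comm]

lemma phi_sim {d n m : ℕ} (hd : 0 < d) {M : Fin n → Matrix (Fin d) (Fin d) ℂ} (hM : IsPOVM M)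
    {q : ℝ} (hs : IsSimulable m (extendPOVM q M)) :
    IsSimulable m (fun i => (q : ℂ) • M i +
      ((1 - q : ℝ) : ℂ) • (((M i).trace / (d : ℂ)) • 1)) := by
  have htr : ∀ i, ((((M i).trace.re : ℝ)) : ℂ) = (M i).trace := by
    intro i
    have h := psd_trace_nonneg (hM.1 i)
    rw [Complex.nonneg_iff] at h
    exact (Complex.ext (by simp) (by simp [h.2.symm]))
  have htr0 : ∀ i, 0 ≤ (M i).trace.re := by
    intro i
    have h := psd_trace_nonneg (hM.1 i)
    rw [Complex.nonneg_iff] at h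
    exact h.1
  apply simulable_post hs
  refine ⟨fun i => Fin.snoc (fun j => if j = i then 1 else 0) ((M i).trace.re / d), ?_, ?_, ?_⟩
  · intro i j
    refine Fin.lastCases ?_ ?_ j
    · simp only [Fin.snoc_last]
      exact div_nonneg (htr0 i) (Nat.cast_nonneg d)
    · intro j'
      simp only [Fin.snoc_castSucc]
      split_ifs <;> norm_num
  · intro j
    refine Fin.lastCases ?_ ?_ j
    · simp only [Fin.snoc_last]
      rw [← Finset.sum_div]
      have : ∑ i, (M i).trace.re = (d : ℝ) := by
        have h2 : ∑ i, (M i).trace = (d : ℂ) := by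
          rw [← Matrix.trace_sum, hM.2, Matrix.trace_one, Fintype.card_fin]
        calc ∑ i, (M i).trace.re = (∑ i, (M i).trace).re := by rw [Complex.re_sum]
          _ = (d : ℝ) := by rw [h2]; simp
      rw [this, div_self (by exact_mod_cast hd.ne')]
    · intro j'
      simp only [Fin.snoc_castSucc]
      simp [Finset.sum_ite_eq]
  · intro i
    simp only [extendPOVM]
    rw [Fin.sum_univ_castSucc]
    simp only [Fin.snoc_castSucc, Fin.snoc_last, apply_ite (Complex.ofReal),
      Complex.ofReal_one, Complex.ofReal_zero, ite_smul, one_smul, zero_smul]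
    rw [Finset.sum_ite_eq' Finset.univ i]
    simp only [Finset.mem_univ, if_true]
    congr 1
    rw [smul_smul, smul_smul]
    congr 1
    rw [← htr i, Complex.ofReal_div, Complex.ofReal_natCast]
    simp only [Complex.ofReal_re]
    ring

lemma zero_sim {d n m : ℕ} (hm : 1 ≤ m) (M : Fin n → Matrix (Fin d) (Fin d) ℂ) :
    IsSimulable m (extendPOVM 0 M) := by
  refine ⟨1, fun _ => 1, fun _ => 1, fun _ _ => 1, fun _ => extendPOVM 0 M,
    fun _ => zero_le_one, by simp, fun _ => hm, fun _ => ⟨fun _ => Matrix.PosSemidef.one, by simp⟩,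
    ?_, fun i => by simp⟩
  intro a
  refine ⟨fun i _ => if i = Fin.last n then 1 else 0, fun i j => by dsimp only; split_ifs <;> norm_num,
    fun j => by simp [Finset.sum_ite_eq'], ?_⟩
  intro i
  rw [Fin.sum_univ_one]
  refine Fin.lastCases ?_ ?_ i
  · simp [extendPOVM]
  · intro j
    have hne : Fin.castSucc j ≠ Fin.last n := (Fin.castSucc_lt_last j).ne
    simp [extendPOVM, hne]

lemma inv_n_sim {d n m : ℕ} (hn : 0 < n) (hm : 2 ≤ m) {M : Fin n → Matrix (Fin d) (Fin d) ℂ}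
    (hM : IsPOVM M) : IsSimulable m (extendPOVM (1 / n) M) := by
  have hn0 : (n : ℝ) ≠ 0 := Nat.cast_ne_zero.mpr hn.ne'
  have hn0' : (n : ℂ) ≠ 0 := Nat.cast_ne_zero.mpr hn.ne'
  have hsub : ∀ a : Fin n, (1 - M a).PosSemidef := by
    intro a
    have he : ∑ b ∈ Finset.univ.erase a, M b = 1 - M a := by
      rw [Finset.sum_erase_eq_sub (Finset.mem_univ a), hM.2]
    rw [← he]
    exact psd_sum _ _ (fun b _ => hM.1 b)
  refine ⟨n, fun _ => 1 / n, fun _ => 2, fun a => ![M a, 1 - M a],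
    fun a => Fin.snoc (fun i => if i = a then M a else 0) (1 - M a),
    fun _ => by positivity, by simp [Finset.sum_const, hn0],
    fun _ => hm, ?_, ?_, ?_⟩
  · intro a
    constructor
    · intro j
      fin_cases j
      · exact hM.1 a
      · exact hsub a
    · rw [Fin.sum_univ_two]
      simp
  · intro a
    refine ⟨fun i j => if j = (0 : Fin 2) then (if i = Fin.castSucc a then 1 else 0)
      else (if i = Fin.last n then 1 else 0), ?_, ?_, ?_⟩
    · intro i j
      dsimp only
      split_ifs <;> norm_num
    · intro j
      by_cases hj : j = (0 : Fin 2) <;>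
        simp [hj, Finset.sum_ite_eq']
    · intro i
      rw [Fin.sum_univ_two]
      norm_num
      refine Fin.lastCases ?_ ?_ i
      · have hne : Fin.last n ≠ Fin.castSucc a := (Fin.castSucc_lt_last a).ne'
        simp [hne]
      · intro j
        have hne : Fin.castSucc j ≠ Fin.last n := (Fin.castSucc_lt_last j).ne
        by_cases hja : j = a
        · subst hja
          simp [hne]
        · have : Fin.castSucc j ≠ Fin.castSucc a := by
            simpa [Fin.castSucc_inj] using hja
          simp [hne, this, hja]
  · intro i
    refine Fin.lastCases ?_ ?_ i
    · simp only [extendPOVM, Fin.snoc_last]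
      simp only [smul_sub]
      rw [Finset.sum_sub_distrib, ← Finset.smul_sum, ← Finset.smul_sum, hM.2, Finset.sum_const,
        Finset.card_univ, Fintype.card_fin, ← Nat.cast_smul_eq_nsmul ℂ n, smul_smul, ← sub_smul]
      congr 1
      push_cast
      field_simp
    · intro j
      simp only [extendPOVM, Fin.snoc_castSucc]
      simp [Finset.sum_ite_eq]

lemma matrix0_eq {A B : Matrix (Fin 0) (Fin 0) ℂ} : A = B := by
  ext i j
  exact i.elim0

lemma all_sim_d0 {n' m : ℕ} (P : Fin n' → Matrix (Fin 0) (Fin 0) ℂ) : IsSimulable m P := by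
  refine ⟨1, fun _ => 1, fun _ => 0, fun _ => Fin.elim0, fun _ _ => 0,
    fun _ => zero_le_one, by simp, fun _ => Nat.zero_le m,
    fun a => ⟨fun i => i.elim0, matrix0_eq⟩,
    fun a => ⟨fun _ j => j.elim0, fun i j => j.elim0, fun j => j.elim0, fun i => matrix0_eq⟩,
    fun i => matrix0_eq⟩

lemma K_povm {d n : ℕ} (hd : 0 < d) {M : Fin n → Matrix (Fin d) (Fin d) ℂ} (hM : IsPOVM M) :
    IsPOVM (fun i => (((M i).trace / (d : ℂ)) • 1 : Matrix (Fin d) (Fin d) ℂ)) := by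
  have htr : ∀ i, ((((M i).trace.re : ℝ)) : ℂ) = (M i).trace := by
    intro i
    have h := psd_trace_nonneg (hM.1 i)
    rw [Complex.nonneg_iff] at h
    exact (Complex.ext (by simp) (by simp [h.2.symm]))
  have htr0 : ∀ i, 0 ≤ (M i).trace.re := by
    intro i
    have h := psd_trace_nonneg (hM.1 i)
    rw [Complex.nonneg_iff] at h
    exact h.1
  constructor
  · intro i
    dsimp only
    have : (M i).trace / (d : ℂ) = (((M i).trace.re / d : ℝ) : ℂ) := by
      rw [Complex.ofReal_div, htr i, Complex.ofReal_natCast]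
    rw [this]
    exact psd_smul_real Matrix.PosSemidef.one (div_nonneg (htr0 i) (Nat.cast_nonneg d))
  · rw [← Finset.sum_smul, ← Finset.sum_div, ← Matrix.trace_sum, hM.2, Matrix.trace_one,
      Fintype.card_fin, div_self (Nat.cast_ne_zero.mpr hd.ne'), one_smul]

/-- `q^{(m)}(M) ≤ t^{(m)}(M)` and `R^{(m)}(M) ≤ 1/q^{(m)}(M) − 1`. -/
theorem statement2 {d n : ℕ} (m : ℕ) (hm : 2 ≤ m)
    (M : Fin n → Matrix (Fin d) (Fin d) ℂ) (hM : IsPOVM M) :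
    qSim m M ≤ tSim m M ∧ RSim m M ≤ 1 / qSim m M - 1 := by
  rcases Nat.eq_zero_or_pos d with hd | hd
  · subst hd
    have hq1 : (1 : ℝ) ∈ {q : ℝ | q ∈ Set.Icc (0:ℝ) 1 ∧ IsSimulable m (extendPOVM q M)} :=
      ⟨⟨zero_le_one, le_refl 1⟩, all_sim_d0 _⟩
    have hqle : qSim m M ≤ 1 := csSup_le ⟨1, hq1⟩ (fun x hx => hx.1.2)
    have hqge : 1 ≤ qSim m M := le_csSup ⟨1, fun x hx => hx.1.2⟩ hq1
    have hqeq : qSim m M = 1 := le_antisymm hqle hqge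
    constructor
    · refine hqle.trans (le_csSup ⟨1, fun x hx => hx.1.2⟩ ?_)
      exact ⟨⟨zero_le_one, le_refl 1⟩, all_sim_d0 _⟩
    · rw [hqeq]
      norm_num
      have h0 : (0 : ℝ) ∈ {s : ℝ | 0 ≤ s ∧ ∃ K : Fin n → Matrix (Fin 0) (Fin 0) ℂ, IsPOVM K ∧
          IsSimulable m (fun i => (((1 + s)⁻¹ : ℝ) : ℂ) • (M i + ((s : ℝ) : ℂ) • K i))} :=
        ⟨le_refl 0, M, hM, all_sim_d0 _⟩
      exact csInf_le ⟨0, fun x hx => hx.1⟩ h0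
  · -- d > 0; first derive n > 0
    have hn : 0 < n := by
      rcases Nat.eq_zero_or_pos n with hn0 | hn0
      · exfalso
        subst hn0
        have h := hM.2
        rw [Finset.univ_eq_empty, Finset.sum_empty] at h
        have := congrFun (congrFun h ⟨0, hd⟩) ⟨0, hd⟩
        simp [Matrix.one_apply] at this
      · exact hn0
    set Sq := {q : ℝ | q ∈ Set.Icc (0:ℝ) 1 ∧ IsSimulable m (extendPOVM q M)} with hSq
    have hbq : BddAbove Sq := ⟨1, fun x hx => hx.1.2⟩
    have h0 : (0 : ℝ) ∈ Sq := ⟨⟨le_refl 0, zero_le_one⟩, zero_sim (by omega) M⟩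
    have hinv : (1 / (n : ℝ)) ∈ Sq := by
      refine ⟨⟨by positivity, ?_⟩, inv_n_sim hn hm hM⟩
      rw [div_le_one (by exact_mod_cast hn)]
      exact_mod_cast hn
    have hQpos : 0 < qSim m M :=
      lt_of_lt_of_le (by positivity) (le_csSup hbq hinv)
    constructor
    · refine csSup_le_csSup ⟨1, fun x hx => hx.1.2⟩ ⟨0, h0⟩ ?_
      rintro q ⟨hq1, hq2⟩
      exact ⟨hq1, phi_sim hd hM hq2⟩
    · have hRb : BddBelow {s : ℝ | 0 ≤ s ∧ ∃ K : Fin n → Matrix (Fin d) (Fin d) ℂ, IsPOVM K ∧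
          IsSimulable m (fun i => (((1 + s)⁻¹ : ℝ) : ℂ) • (M i + ((s : ℝ) : ℂ) • K i))} :=
        ⟨0, fun x hx => hx.1⟩
      have hR0 : 0 ≤ RSim m M := Real.sInf_nonneg (fun x hx => hx.1)
      have key : ∀ q ∈ Sq, q ≤ 1 / (RSim m M + 1) := by
        intro q hq
        rcases eq_or_lt_of_le hq.1.1 with hq0 | hq0
        · rw [← hq0]
          positivity
        · -- q > 0 : show (1-q)/q is in the robustness set
          have hq1 : q ≤ 1 := hq.1.2
          set s := (1 - q) / q with hs
          have hs0 : 0 ≤ s := div_nonneg (by linarith) hq0.le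
          have hinv' : ((1 + s)⁻¹ : ℝ) = q := by
            rw [hs]
            field_simp
            ring
          have hmem : s ∈ {s : ℝ | 0 ≤ s ∧ ∃ K : Fin n → Matrix (Fin d) (Fin d) ℂ, IsPOVM K ∧
              IsSimulable m (fun i => (((1 + s)⁻¹ : ℝ) : ℂ) • (M i + ((s : ℝ) : ℂ) • K i))} := by
            refine ⟨hs0, fun i => ((M i).trace / (d : ℂ)) • 1, K_povm hd hM, ?_⟩
            have heq : (fun i => (((1 + s)⁻¹ : ℝ) : ℂ) •
                (M i + ((s : ℝ) : ℂ) • ((M i).trace / (d : ℂ)) • 1)) =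
                (fun i => (q : ℂ) • M i +
                  ((1 - q : ℝ) : ℂ) • (((M i).trace / (d : ℂ)) • 1)) := by
              funext i
              rw [hinv', smul_add, smul_smul, ← Complex.ofReal_mul]
              congr 2
              rw [hs]
              field_simp
            rw [heq]
            exact phi_sim hd hM hq.2
          have hle : RSim m M ≤ s := csInf_le hRb hmem
          -- from RSim ≤ (1-q)/q deduce q ≤ 1/(RSim+1)
          rw [le_div_iff₀ (by linarith)]
          have hqs : q * s = 1 - q := by rw [hs]; field_simp
          have hmul : q * RSim m M ≤ q * s := mul_le_mul_of_nonneg_left hle hq0.le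
          nlinarith
      have hQle : qSim m M ≤ 1 / (RSim m M + 1) := csSup_le ⟨0, h0⟩ key
      have h2 : qSim m M * (RSim m M + 1) ≤ 1 := by
        rw [le_div_iff₀ (by positivity : (0:ℝ) < RSim m M + 1)] at hQle
        exact hQle
      rw [le_sub_iff_add_le, le_div_iff₀ hQpos, mul_comm]
      exact h2
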